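/- arXiv:1209.2185 — 4 statements merged into one kernel-verified Lean document; each statement's English description precedes it below -/
import Mathlib

section
/- If the column space of A is contained in the column space of B (both matrices having m rows), then the coherence of A is at most the coherence of B: μ(A) ≤ μ(B). -/
/-!
Since range UA ⊆ range UB, UA = UB C with C = UBᵀ UA, and C has orthonormal columns because UA
does. Hence UB UBᵀ - UA UAᵀ = UB (1 - C Cᵀ) UBᵀ is positive semidefinite, `1 - C Cᵀ` being an
orthogonal projection. Its diagonal entries, the differences of the squared row norms of UB and
UA, are therefore nonnegative, and the coherence, the largest squared row norm, can only grow.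
-/

open Matrix

/-- coherence given a matrix `U` whose columns are an orthonormal basis of the column space -/
noncomputable def coh {m p : ℕ} (U : Matrix (Fin m) (Fin p) ℝ) : ℝ :=
  ⨆ i : Fin m, ∑ j, U i j ^ 2

theorem Matrix.mul_transpose_mul_eq_of_range_le {R m n k : Type*} [CommRing R] [Fintype m]
    [Fintype n] [Fintype k] [DecidableEq n] {U : Matrix m n R} {V : Matrix m k R}
    (hU : Uᵀ * U = 1) (h : LinearMap.range V.mulVecLin ≤ LinearMap.range U.mulVecLin) :
    U * (Uᵀ * V) = V := by
  refine ext_iff_mulVec.2 fun x => ?_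
  obtain ⟨y, hy⟩ := h ⟨x, rfl⟩
  change U *ᵥ y = V *ᵥ x at hy
  rw [← mulVec_mulVec, ← mulVec_mulVec, ← hy, mulVec_mulVec y, hU, one_mulVec]

theorem Matrix.posSemidef_one_sub_mul_transpose {n k : Type*} [Fintype n] [Fintype k]
    [DecidableEq n] [DecidableEq k] {C : Matrix n k ℝ} (hC : Cᵀ * C = 1) :
    (1 - C * Cᵀ).PosSemidef := by
  have hproj : (1 - C * Cᵀ)ᵀ * (1 - C * Cᵀ) = 1 - C * Cᵀ := by
    have hCC : C * Cᵀ * (C * Cᵀ) = C * Cᵀ := by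
      rw [Matrix.mul_assoc, ← Matrix.mul_assoc Cᵀ, hC, Matrix.one_mul]
    rw [transpose_sub, transpose_one, transpose_mul, transpose_transpose, sub_mul, mul_sub,
      mul_sub, hCC]
    simp
  rw [← hproj, ← conjTranspose_eq_transpose_of_trivial]
  exact posSemidef_conjTranspose_mul_self _

theorem Matrix.sum_sq_eq_mul_transpose_apply {R m n : Type*} [CommSemiring R] [Fintype n]
    (U : Matrix m n R) (i : m) :
    ∑ j, U i j ^ 2 = (U * Uᵀ) i i := by
  simp [mul_apply, sq]

theorem Matrix.posSemidef_mul_transpose_sub_of_range_le {m n k : Type*} [Fintype m]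
    [Fintype n] [Fintype k] [DecidableEq n] [DecidableEq k] {U : Matrix m n ℝ}
    {V : Matrix m k ℝ} (hU : Uᵀ * U = 1) (hV : Vᵀ * V = 1)
    (h : LinearMap.range V.mulVecLin ≤ LinearMap.range U.mulVecLin) :
    (U * Uᵀ - V * Vᵀ).PosSemidef := by
  set C := Uᵀ * V
  have hUC : U * C = V := mul_transpose_mul_eq_of_range_le hU h
  have hC : Cᵀ * C = 1 := by
    rw [transpose_mul, transpose_transpose, Matrix.mul_assoc, hUC, hV]
  have := (posSemidef_one_sub_mul_transpose hC).mul_mul_conjTranspose_same U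
  rwa [conjTranspose_eq_transpose_of_trivial, Matrix.mul_sub, Matrix.sub_mul, Matrix.mul_one,
    ← Matrix.mul_assoc, hUC, Matrix.mul_assoc, ← transpose_mul, hUC] at this

theorem stmt1 {m n ℓ p q : ℕ} (A : Matrix (Fin m) (Fin n) ℝ) (B : Matrix (Fin m) (Fin ℓ) ℝ)
    (UA : Matrix (Fin m) (Fin p) ℝ) (UB : Matrix (Fin m) (Fin q) ℝ)
    (hUA : UAᵀ * UA = 1) (hUB : UBᵀ * UB = 1)
    (hrA : LinearMap.range UA.mulVecLin = LinearMap.range A.mulVecLin)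
    (hrB : LinearMap.range UB.mulVecLin = LinearMap.range B.mulVecLin)
    (hAB : LinearMap.range A.mulVecLin ≤ LinearMap.range B.mulVecLin) :
    coh UA ≤ coh UB := by
  have hle : LinearMap.range UA.mulVecLin ≤ LinearMap.range UB.mulVecLin := hrA ▸ hrB ▸ hAB
  have hpsd := posSemidef_mul_transpose_sub_of_range_le hUB hUA hle
  refine ciSup_mono (Set.finite_range _).bddAbove fun i => ?_
  rw [sum_sq_eq_mul_transpose_apply, sum_sq_eq_mul_transpose_apply, ← sub_nonneg]
  exact hpsd.diag_nonneg
end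

section
/- Let Ψ ∈ ℝ^{p×q} and Φ = D_L Ψ D_R with D_L ∈ ℝ^{p×p}, D_R ∈ ℝ^{q×q} nonsingular. Let γ = max(‖D_L D_L^T − I_p‖₂, ‖D_R^T D_R − I_q‖₂). Then for all i = 1,…,rank(Ψ): |σ_i(Φ) − σ_i(Ψ)| ≤ γ · σ_i(Ψ). -/
open Matrix

theorem Matrix.isHermitian_transpose_mul_self {m n α : Type*} [Fintype m] [CommSemiring α]
    [StarRing α] [TrivialStar α] (A : Matrix m n α) : (Aᵀ * A).IsHermitian := by
  have h := Matrix.isHermitian_conjTranspose_mul_self A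
  rwa [Matrix.conjTranspose_eq_transpose_of_trivial] at h

noncomputable def svals {p q : ℕ} (X : Matrix (Fin p) (Fin q) ℝ) : Fin q → ℝ :=
  fun i => Real.sqrt ((Matrix.isHermitian_transpose_mul_self X).eigenvalues
    (Tuple.sort ((Matrix.isHermitian_transpose_mul_self X).eigenvalues) i.rev))

noncomputable def sNorm {p q : ℕ} (X : Matrix (Fin p) (Fin q) ℝ) : ℝ :=
  ⨆ i, svals X i

/-!
Write `‖v‖² = v ⬝ᵥ v`. The bound `sNorm (DL * DLᵀ - 1) ≤ γ` says
`(1 - γ) ‖y‖² ≤ ‖DLᵀ y‖² ≤ (1 + γ) ‖y‖²`, and similarly for `DR`; passing to transposes and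
inverses, `‖DL‖, ‖DR‖ ≤ √(1 + γ)` and, if `γ < 1`, `‖DL⁻¹‖, ‖DR⁻¹‖ ≤ 1 / √(1 - γ)`.
A Courant–Fischer argument gives `σᵢ(A X B) ≤ ‖A‖ σᵢ(X) ‖B‖`; applied to `Φ = DL Ψ DR` and to
`Ψ = DL⁻¹ Φ DR⁻¹` it yields `(1 - γ) σᵢ(Ψ) ≤ σᵢ(Φ) ≤ (1 + γ) σᵢ(Ψ)`. For `γ ≥ 1` the lower
bound is trivial.
-/

theorem Submodule.exists_ne_zero_mem_inf_of_finrank_lt {K V : Type*} [DivisionRing K]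
    [AddCommGroup V] [Module K V] [FiniteDimensional K V] (W₁ W₂ : Submodule K V)
    (h : Module.finrank K V < Module.finrank K W₁ + Module.finrank K W₂) :
    ∃ x ∈ W₁ ⊓ W₂, x ≠ 0 := by
  have hsum := Submodule.finrank_sup_add_finrank_inf_eq W₁ W₂
  have hle := Submodule.finrank_le (W₁ ⊔ W₂)
  have hpos : 0 < Module.finrank K ↥(W₁ ⊓ W₂) := by omega
  obtain ⟨x, hx⟩ := Module.finrank_pos_iff_exists_ne_zero.mp hpos
  exact ⟨x, x.2, fun h0 => hx (Subtype.ext h0)⟩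

namespace Matrix

section

variable {m n : Type*} [Fintype m] [Fintype n]

lemma dotProduct_sq_le_dotProduct_self_mul_dotProduct_self (x y : n → ℝ) :
    (x ⬝ᵥ y) ^ 2 ≤ (x ⬝ᵥ x) * (y ⬝ᵥ y) := by
  simpa only [dotProduct, pow_two] using Finset.sum_mul_sq_le_sq_mul_sq Finset.univ x y

lemma dotProduct_self_nonneg (x : n → ℝ) : 0 ≤ x ⬝ᵥ x :=
  dotProduct_star_self_nonneg x

lemma mulVec_dotProduct_eq_dotProduct_transpose_mulVec (A : Matrix m n ℝ) (x : n → ℝ)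
    (y : m → ℝ) : (A *ᵥ x) ⬝ᵥ y = x ⬝ᵥ (Aᵀ *ᵥ y) := by
  rw [dotProduct_mulVec, vecMul_transpose]

lemma dotProduct_transpose_mul_self_mulVec (A : Matrix m n ℝ) (x : n → ℝ) :
    x ⬝ᵥ ((Aᵀ * A) *ᵥ x) = (A *ᵥ x) ⬝ᵥ (A *ᵥ x) := by
  rw [← mulVec_mulVec, mulVec_dotProduct_eq_dotProduct_transpose_mulVec]

lemma mulVec_dotProduct_self_le_of_transpose {A : Matrix m n ℝ} {C : ℝ} (hC : 0 ≤ C)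
    (h : ∀ y, (Aᵀ *ᵥ y) ⬝ᵥ (Aᵀ *ᵥ y) ≤ C * (y ⬝ᵥ y)) (x : n → ℝ) :
    (A *ᵥ x) ⬝ᵥ (A *ᵥ x) ≤ C * (x ⬝ᵥ x) := by
  set z := A *ᵥ x
  have key : (z ⬝ᵥ z) * (z ⬝ᵥ z) ≤ (C * (x ⬝ᵥ x)) * (z ⬝ᵥ z) := calc
    (z ⬝ᵥ z) * (z ⬝ᵥ z) = (x ⬝ᵥ (Aᵀ *ᵥ z)) ^ 2 := by
      rw [← mulVec_dotProduct_eq_dotProduct_transpose_mulVec, sq]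
    _ ≤ (x ⬝ᵥ x) * ((Aᵀ *ᵥ z) ⬝ᵥ (Aᵀ *ᵥ z)) :=
      dotProduct_sq_le_dotProduct_self_mul_dotProduct_self _ _
    _ ≤ (x ⬝ᵥ x) * (C * (z ⬝ᵥ z)) := mul_le_mul_of_nonneg_left (h z) (dotProduct_self_nonneg x)
    _ = (C * (x ⬝ᵥ x)) * (z ⬝ᵥ z) := by ring
  rcases (dotProduct_self_nonneg z).eq_or_lt with hz | hz
  · rw [← hz]; exact mul_nonneg hC (dotProduct_self_nonneg x)
  · exact le_of_mul_le_mul_right key hz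

lemma inv_mulVec_dotProduct_self_le [DecidableEq n] {A : Matrix n n ℝ} (hA : IsUnit A.det)
    {c : ℝ} (hc : 0 < c) (h : ∀ y, c * (y ⬝ᵥ y) ≤ (A *ᵥ y) ⬝ᵥ (A *ᵥ y)) (z : n → ℝ) :
    (A⁻¹ *ᵥ z) ⬝ᵥ (A⁻¹ *ᵥ z) ≤ c⁻¹ * (z ⬝ᵥ z) := by
  rw [le_inv_mul_iff₀ hc]
  simpa only [mulVec_mulVec, mul_nonsing_inv A hA, one_mulVec] using h (A⁻¹ *ᵥ z)

variable [DecidableEq n] {M : Matrix n n ℝ}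

lemma IsHermitian.star_eigenvectorUnitary_mulVec_apply (hM : M.IsHermitian) (x : n → ℝ) (j : n) :
    (star (hM.eigenvectorUnitary : Matrix n n ℝ) *ᵥ x) j = ⇑(hM.eigenvectorBasis j) ⬝ᵥ x := by
  simp [mulVec, dotProduct, star_apply]

lemma IsHermitian.vecMul_eigenvectorUnitary (hM : M.IsHermitian) (x : n → ℝ) :
    x ᵥ* (hM.eigenvectorUnitary : Matrix n n ℝ) =
      star (hM.eigenvectorUnitary : Matrix n n ℝ) *ᵥ x := by
  rw [← mulVec_transpose, star_eq_conjTranspose, conjTranspose_eq_transpose_of_trivial]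

lemma IsHermitian.dotProduct_mulVec_eq_sum (hM : M.IsHermitian) (x : n → ℝ) :
    x ⬝ᵥ (M *ᵥ x) = ∑ j, hM.eigenvalues j * (⇑(hM.eigenvectorBasis j) ⬝ᵥ x) ^ 2 := by
  conv_lhs => rw [hM.spectral_theorem, Unitary.conjStarAlgAut_apply, ← mulVec_mulVec,
    ← mulVec_mulVec, dotProduct_mulVec, hM.vecMul_eigenvectorUnitary]
  simp only [dotProduct, mulVec_diagonal, Function.comp_apply, RCLike.ofReal_real_eq_id, id_eq,
    hM.star_eigenvectorUnitary_mulVec_apply]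
  exact Finset.sum_congr rfl fun j _ => by ring

lemma IsHermitian.dotProduct_self_eq_sum (hM : M.IsHermitian) (x : n → ℝ) :
    x ⬝ᵥ x = ∑ j, (⇑(hM.eigenvectorBasis j) ⬝ᵥ x) ^ 2 := by
  nth_rw 2 [← one_mulVec x]
  rw [← Unitary.mul_star_self_of_mem hM.eigenvectorUnitary.2, ← mulVec_mulVec, dotProduct_mulVec,
    hM.vecMul_eigenvectorUnitary]
  simp only [dotProduct, hM.star_eigenvectorUnitary_mulVec_apply, sq]

noncomputable def IsHermitian.eigenvectorSpan (hM : M.IsHermitian) (S : Finset n) :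
    Submodule ℝ (n → ℝ) :=
  Submodule.span ℝ ((fun j => ⇑(hM.eigenvectorBasis j)) '' S)

lemma IsHermitian.finrank_eigenvectorSpan (hM : M.IsHermitian) (S : Finset n) :
    Module.finrank ℝ (hM.eigenvectorSpan S) = S.card := by
  have hli : LinearIndependent ℝ fun j : (S : Set n) => ⇑(hM.eigenvectorBasis j) :=
    (hM.eigenvectorBasis.orthonormal.linearIndependent.map' _
      (WithLp.linearEquiv 2 ℝ (n → ℝ)).ker).comp _ Subtype.val_injective
  rw [IsHermitian.eigenvectorSpan, Set.image_eq_range, finrank_span_eq_card hli]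
  simp

lemma IsHermitian.dotProduct_eq_zero_of_mem_eigenvectorSpan (hM : M.IsHermitian)
    {S : Finset n} {x : n → ℝ} (hx : x ∈ hM.eigenvectorSpan S) {j : n} (hj : j ∉ S) :
    ⇑(hM.eigenvectorBasis j) ⬝ᵥ x = 0 := by
  induction hx using Submodule.span_induction with
  | mem y hy =>
    obtain ⟨k, hk, rfl⟩ := hy
    rw [← hM.star_eigenvectorUnitary_mulVec_apply, star_eigenvectorUnitary_mulVec,
      Pi.single_eq_of_ne (ne_of_mem_of_not_mem hk hj).symm]
  | zero => exact dotProduct_zero _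
  | add y z _ _ hy hz => rw [dotProduct_add, hy, hz, add_zero]
  | smul a y _ hy => rw [dotProduct_smul, hy, smul_zero]

lemma IsHermitian.dotProduct_mulVec_le_of_eigenvalues_le (hM : M.IsHermitian)
    {S : Finset n} {c : ℝ} (hc : ∀ j ∈ S, hM.eigenvalues j ≤ c) {x : n → ℝ}
    (hx : ∀ j ∉ S, ⇑(hM.eigenvectorBasis j) ⬝ᵥ x = 0) :
    x ⬝ᵥ (M *ᵥ x) ≤ c * (x ⬝ᵥ x) := by
  rw [hM.dotProduct_mulVec_eq_sum, hM.dotProduct_self_eq_sum, Finset.mul_sum]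
  refine Finset.sum_le_sum fun j _ => ?_
  by_cases hj : j ∈ S
  · exact mul_le_mul_of_nonneg_right (hc j hj) (sq_nonneg _)
  · simp [hx j hj]

lemma IsHermitian.le_dotProduct_mulVec_of_le_eigenvalues (hM : M.IsHermitian)
    {S : Finset n} {c : ℝ} (hc : ∀ j ∈ S, c ≤ hM.eigenvalues j) {x : n → ℝ}
    (hx : ∀ j ∉ S, ⇑(hM.eigenvectorBasis j) ⬝ᵥ x = 0) :
    c * (x ⬝ᵥ x) ≤ x ⬝ᵥ (M *ᵥ x) := by
  rw [hM.dotProduct_mulVec_eq_sum, hM.dotProduct_self_eq_sum, Finset.mul_sum]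
  refine Finset.sum_le_sum fun j _ => ?_
  by_cases hj : j ∈ S
  · exact mul_le_mul_of_nonneg_right (hc j hj) (sq_nonneg _)
  · simp [hx j hj]

end

/- Courant–Fischer: the span of the eigenvectors of `M` for its `n - t` largest eigenvalues meets
the preimage under `B` of the span of the eigenvectors of `N` for its `t + 1` smallest ones, and a
common nonzero vector compares the two `t`-th eigenvalues. -/
lemma IsHermitian.eigenvalues_sort_le_of_dotProduct_mulVec_le {n : ℕ}
    {M N B : Matrix (Fin n) (Fin n) ℝ}
    (hM : M.IsHermitian) (hN : N.IsHermitian) (hN₀ : ∀ j, 0 ≤ hN.eigenvalues j)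
    (hB : IsUnit B.det) {c κ : ℝ} (hc : 0 ≤ c)
    (hBκ : ∀ x, (B *ᵥ x) ⬝ᵥ (B *ᵥ x) ≤ κ * (x ⬝ᵥ x))
    (hMN : ∀ x, x ⬝ᵥ (M *ᵥ x) ≤ c * ((B *ᵥ x) ⬝ᵥ (N *ᵥ (B *ᵥ x)))) (t : Fin n) :
    hM.eigenvalues (Tuple.sort hM.eigenvalues t) ≤
      c * κ * hN.eigenvalues (Tuple.sort hN.eigenvalues t) := by
  set σM := Tuple.sort hM.eigenvalues
  set σN := Tuple.sort hN.eigenvalues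
  let eB := B.toLinearEquiv' (B.invertibleOfIsUnitDet hB)
  set W₁ := hM.eigenvectorSpan ((Finset.Ici t).image σM)
  set W₂ := (hN.eigenvectorSpan ((Finset.Iic t).image σN)).comap (eB : (Fin n → ℝ) →ₗ[ℝ] _)
  have hW₁ : Module.finrank ℝ W₁ = n - t := by
    rw [hM.finrank_eigenvectorSpan, Finset.card_image_of_injective _ σM.injective, Fin.card_Ici]
  have hW₂ : Module.finrank ℝ W₂ = t + 1 := by
    rw [show W₂ = _ from Submodule.comap_equiv_eq_map_symm eB _, LinearEquiv.finrank_map_eq,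
      hN.finrank_eigenvectorSpan, Finset.card_image_of_injective _ σN.injective, Fin.card_Iic]
  obtain ⟨x, ⟨hx₁, hx₂⟩, hx⟩ := Submodule.exists_ne_zero_mem_inf_of_finrank_lt W₁ W₂ (by
    rw [Module.finrank_fin_fun, hW₁, hW₂]; omega)
  replace hx₂ : B *ᵥ x ∈ hN.eigenvectorSpan ((Finset.Iic t).image σN) := hx₂
  have hlow : hM.eigenvalues (σM t) * (x ⬝ᵥ x) ≤ x ⬝ᵥ (M *ᵥ x) := by
    refine hM.le_dotProduct_mulVec_of_le_eigenvalues (S := (Finset.Ici t).image σM) ?_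
      fun j hj => hM.dotProduct_eq_zero_of_mem_eigenvectorSpan hx₁ hj
    simp only [Finset.mem_image, Finset.mem_Ici]
    rintro _ ⟨s, hts, rfl⟩
    exact Tuple.monotone_sort hM.eigenvalues hts
  have hhigh : (B *ᵥ x) ⬝ᵥ (N *ᵥ (B *ᵥ x)) ≤ hN.eigenvalues (σN t) * ((B *ᵥ x) ⬝ᵥ (B *ᵥ x)) := by
    refine hN.dotProduct_mulVec_le_of_eigenvalues_le (S := (Finset.Iic t).image σN) ?_
      fun j hj => hN.dotProduct_eq_zero_of_mem_eigenvectorSpan hx₂ hj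
    simp only [Finset.mem_image, Finset.mem_Iic]
    rintro _ ⟨s, hst, rfl⟩
    exact Tuple.monotone_sort hN.eigenvalues hst
  have hxx : 0 < x ⬝ᵥ x := dotProduct_self_star_pos_iff.mpr hx
  refine le_of_mul_le_mul_right ?_ hxx
  calc hM.eigenvalues (σM t) * (x ⬝ᵥ x) ≤ x ⬝ᵥ (M *ᵥ x) := hlow
    _ ≤ c * ((B *ᵥ x) ⬝ᵥ (N *ᵥ (B *ᵥ x))) := hMN x
    _ ≤ c * (hN.eigenvalues (σN t) * (κ * (x ⬝ᵥ x))) := by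
      gcongr
      exact hhigh.trans (mul_le_mul_of_nonneg_left (hBκ x) (hN₀ _))
    _ = c * κ * hN.eigenvalues (σN t) * (x ⬝ᵥ x) := by ring

end Matrix

section SingularValues

variable {m p q : ℕ}

lemma svals_nonneg (X : Matrix (Fin p) (Fin q) ℝ) (i : Fin q) : 0 ≤ svals X i :=
  Real.sqrt_nonneg _

lemma svals_le_sNorm (X : Matrix (Fin p) (Fin q) ℝ) (i : Fin q) : svals X i ≤ sNorm X :=
  le_ciSup (Set.finite_range _).bddAbove i

lemma sNorm_nonneg (X : Matrix (Fin p) (Fin q) ℝ) : 0 ≤ sNorm X :=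
  Real.iSup_nonneg (svals_nonneg X)

lemma eigenvalues_transpose_mul_self_nonneg (X : Matrix (Fin p) (Fin q) ℝ) (j : Fin q) :
    0 ≤ (isHermitian_transpose_mul_self X).eigenvalues j :=
  eigenvalues_conjTranspose_mul_self_nonneg X j

lemma eigenvalues_transpose_mul_self_le_sNorm_sq (X : Matrix (Fin p) (Fin q) ℝ) (j : Fin q) :
    (isHermitian_transpose_mul_self X).eigenvalues j ≤ sNorm X ^ 2 := by
  set σ := Tuple.sort (isHermitian_transpose_mul_self X).eigenvalues
  have hj : svals X (σ.symm j).rev = √((isHermitian_transpose_mul_self X).eigenvalues j) := by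
    rw [svals, Fin.rev_rev, Equiv.apply_symm_apply]
  rw [← Real.sq_sqrt (eigenvalues_transpose_mul_self_nonneg X j), ← hj]
  exact pow_le_pow_left₀ (svals_nonneg X _) (svals_le_sNorm X _) 2

lemma mulVec_dotProduct_self_le_sNorm_sq (X : Matrix (Fin p) (Fin q) ℝ) (x : Fin q → ℝ) :
    (X *ᵥ x) ⬝ᵥ (X *ᵥ x) ≤ sNorm X ^ 2 * (x ⬝ᵥ x) := by
  rw [← dotProduct_transpose_mul_self_mulVec]
  exact (isHermitian_transpose_mul_self X).dotProduct_mulVec_le_of_eigenvalues_le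
    (S := Finset.univ) (fun j _ => eigenvalues_transpose_mul_self_le_sNorm_sq X j) (by simp)

lemma abs_dotProduct_mulVec_le_sNorm_mul (E : Matrix (Fin q) (Fin q) ℝ) (x : Fin q → ℝ) :
    |x ⬝ᵥ (E *ᵥ x)| ≤ sNorm E * (x ⬝ᵥ x) := by
  refine abs_le_of_sq_le_sq ?_ (mul_nonneg (sNorm_nonneg E) (dotProduct_self_nonneg x))
  calc (x ⬝ᵥ (E *ᵥ x)) ^ 2 ≤ (x ⬝ᵥ x) * ((E *ᵥ x) ⬝ᵥ (E *ᵥ x)) :=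
        dotProduct_sq_le_dotProduct_self_mul_dotProduct_self _ _
    _ ≤ (x ⬝ᵥ x) * (sNorm E ^ 2 * (x ⬝ᵥ x)) :=
        mul_le_mul_of_nonneg_left (mulVec_dotProduct_self_le_sNorm_sq E x)
          (dotProduct_self_nonneg x)
    _ = (sNorm E * (x ⬝ᵥ x)) ^ 2 := by ring

lemma abs_mulVec_dotProduct_self_sub_le (A : Matrix (Fin p) (Fin q) ℝ) (x : Fin q → ℝ) :
    |(A *ᵥ x) ⬝ᵥ (A *ᵥ x) - x ⬝ᵥ x| ≤ sNorm (Aᵀ * A - 1) * (x ⬝ᵥ x) := by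
  have h : (A *ᵥ x) ⬝ᵥ (A *ᵥ x) - x ⬝ᵥ x = x ⬝ᵥ ((Aᵀ * A - 1) *ᵥ x) := by
    rw [sub_mulVec, one_mulVec, dotProduct_sub, dotProduct_transpose_mul_self_mulVec]
  rw [h]
  exact abs_dotProduct_mulVec_le_sNorm_mul _ x

lemma mulVec_dotProduct_self_le_one_add_mul {A : Matrix (Fin p) (Fin q) ℝ} {γ : ℝ}
    (hA : sNorm (Aᵀ * A - 1) ≤ γ) (x : Fin q → ℝ) :
    (A *ᵥ x) ⬝ᵥ (A *ᵥ x) ≤ (1 + γ) * (x ⬝ᵥ x) := by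
  have h := (abs_le.mp (abs_mulVec_dotProduct_self_sub_le A x)).2
  linarith [mul_le_mul_of_nonneg_right hA (dotProduct_self_nonneg x)]

lemma one_sub_mul_le_mulVec_dotProduct_self {A : Matrix (Fin p) (Fin q) ℝ} {γ : ℝ}
    (hA : sNorm (Aᵀ * A - 1) ≤ γ) (x : Fin q → ℝ) :
    (1 - γ) * (x ⬝ᵥ x) ≤ (A *ᵥ x) ⬝ᵥ (A *ᵥ x) := by
  have h := (abs_le.mp (abs_mulVec_dotProduct_self_sub_le A x)).1
  linarith [mul_le_mul_of_nonneg_right hA (dotProduct_self_nonneg x)]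

theorem svals_mul_mul_le {A : Matrix (Fin m) (Fin p) ℝ} (X : Matrix (Fin p) (Fin q) ℝ)
    {B : Matrix (Fin q) (Fin q) ℝ} (hB : IsUnit B.det) {α β : ℝ} (hα : 0 ≤ α) (hβ : 0 ≤ β)
    (hAα : ∀ y, (A *ᵥ y) ⬝ᵥ (A *ᵥ y) ≤ α ^ 2 * (y ⬝ᵥ y))
    (hBβ : ∀ x, (B *ᵥ x) ⬝ᵥ (B *ᵥ x) ≤ β ^ 2 * (x ⬝ᵥ x)) (i : Fin q) :
    svals (A * X * B) i ≤ α * β * svals X i := by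
  have h := (isHermitian_transpose_mul_self (A * X * B)).eigenvalues_sort_le_of_dotProduct_mulVec_le
    (isHermitian_transpose_mul_self X) (eigenvalues_transpose_mul_self_nonneg X) hB (sq_nonneg α)
    hBβ (fun x => by
      rw [dotProduct_transpose_mul_self_mulVec, dotProduct_transpose_mul_self_mulVec,
        ← mulVec_mulVec, ← mulVec_mulVec]
      exact hAα _) i.rev
  rw [svals, svals, ← Real.sqrt_sq (mul_nonneg hα hβ), ← Real.sqrt_mul (sq_nonneg _)]
  exact Real.sqrt_le_sqrt (h.trans_eq (by ring))

theorem svals_mul_mul_le_one_add_mul {A : Matrix (Fin m) (Fin p) ℝ} (X : Matrix (Fin p) (Fin q) ℝ)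
    {B : Matrix (Fin q) (Fin q) ℝ} (hB : IsUnit B.det) {γ : ℝ}
    (hAγ : sNorm (A * Aᵀ - 1) ≤ γ) (hBγ : sNorm (Bᵀ * B - 1) ≤ γ) (i : Fin q) :
    svals (A * X * B) i ≤ (1 + γ) * svals X i := by
  have h1γ : 0 ≤ 1 + γ := by linarith [sNorm_nonneg (A * Aᵀ - 1)]
  have hAT : ∀ y, (Aᵀ *ᵥ y) ⬝ᵥ (Aᵀ *ᵥ y) ≤ (1 + γ) * (y ⬝ᵥ y) :=
    mulVec_dotProduct_self_le_one_add_mul (by rwa [transpose_transpose])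
  have h := svals_mul_mul_le (A := A) X hB (Real.sqrt_nonneg (1 + γ)) (Real.sqrt_nonneg (1 + γ))
    (by simpa only [Real.sq_sqrt h1γ] using mulVec_dotProduct_self_le_of_transpose h1γ hAT)
    (by simpa only [Real.sq_sqrt h1γ] using mulVec_dotProduct_self_le_one_add_mul hBγ) i
  rwa [Real.mul_self_sqrt h1γ] at h

theorem one_sub_mul_svals_le_svals_mul_mul {A : Matrix (Fin p) (Fin p) ℝ}
    (X : Matrix (Fin p) (Fin q) ℝ) {B : Matrix (Fin q) (Fin q) ℝ} (hA : IsUnit A.det)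
    (hB : IsUnit B.det) {γ : ℝ} (hγ : γ < 1)
    (hAγ : sNorm (A * Aᵀ - 1) ≤ γ) (hBγ : sNorm (Bᵀ * B - 1) ≤ γ) (i : Fin q) :
    (1 - γ) * svals X i ≤ svals (A * X * B) i := by
  have h1γ : 0 < 1 - γ := sub_pos.mpr hγ
  have hc : 0 ≤ (1 - γ)⁻¹ := inv_nonneg.mpr h1γ.le
  have hX : A⁻¹ * (A * X * B) * B⁻¹ = X := by
    rw [← Matrix.mul_assoc, ← Matrix.mul_assoc, nonsing_inv_mul A hA, Matrix.one_mul,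
      Matrix.mul_assoc, mul_nonsing_inv B hB, Matrix.mul_one]
  have hAinvT : ∀ y, ((A⁻¹)ᵀ *ᵥ y) ⬝ᵥ ((A⁻¹)ᵀ *ᵥ y) ≤ (1 - γ)⁻¹ * (y ⬝ᵥ y) := by
    rw [transpose_nonsing_inv]
    exact inv_mulVec_dotProduct_self_le (by rwa [det_transpose]) h1γ
      (one_sub_mul_le_mulVec_dotProduct_self (by rwa [transpose_transpose]))
  have h := svals_mul_mul_le (A := A⁻¹) (A * X * B) (isUnit_nonsing_inv_det B hB)
    (Real.sqrt_nonneg (1 - γ)⁻¹) (Real.sqrt_nonneg (1 - γ)⁻¹)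
    (by simpa only [Real.sq_sqrt hc] using mulVec_dotProduct_self_le_of_transpose hc hAinvT)
    (by simpa only [Real.sq_sqrt hc] using
      inv_mulVec_dotProduct_self_le hB h1γ (one_sub_mul_le_mulVec_dotProduct_self hBγ)) i
  rwa [hX, Real.mul_self_sqrt hc, le_inv_mul_iff₀ h1γ] at h

end SingularValues

theorem stmt6_general {p q : ℕ} (Ψ : Matrix (Fin p) (Fin q) ℝ)
    (DL : Matrix (Fin p) (Fin p) ℝ) (DR : Matrix (Fin q) (Fin q) ℝ)
    (hDL : IsUnit DL.det) (hDR : IsUnit DR.det)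
    (i : Fin q) :
    |svals (DL * Ψ * DR) i - svals Ψ i| ≤
      max (sNorm (DL * DLᵀ - 1)) (sNorm (DRᵀ * DR - 1)) * svals Ψ i := by
  set γ := max (sNorm (DL * DLᵀ - 1)) (sNorm (DRᵀ * DR - 1))
  have hL : sNorm (DL * DLᵀ - 1) ≤ γ := le_max_left _ _
  have hR : sNorm (DRᵀ * DR - 1) ≤ γ := le_max_right _ _
  have upper := svals_mul_mul_le_one_add_mul Ψ hDR hL hR i
  rw [abs_sub_le_iff]
  refine ⟨by linarith, ?_⟩
  rcases lt_or_ge γ 1 with hγ | hγ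
  · linarith [one_sub_mul_svals_le_svals_mul_mul Ψ hDL hDR hγ hL hR i]
  · linarith [le_mul_of_one_le_left (svals_nonneg Ψ i) hγ, svals_nonneg (DL * Ψ * DR) i]

theorem stmt6 {p q : ℕ} (Ψ : Matrix (Fin p) (Fin q) ℝ)
    (DL : Matrix (Fin p) (Fin p) ℝ) (DR : Matrix (Fin q) (Fin q) ℝ)
    (hDL : IsUnit DL.det) (hDR : IsUnit DR.det)
    (i : Fin q) (hi : (i : ℕ) < Ψ.rank) :
    |svals (DL * Ψ * DR) i - svals Ψ i| ≤
      max (sNorm (DL * DLᵀ - 1)) (sNorm (DRᵀ * DR - 1)) * svals Ψ i :=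
  stmt6_general Ψ DL DR hDL hDR i
end

section
/- Let A ∈ ℝ^{m×n} and S ∈ ℝ^{r×m} with rank(SA) = rank(A) = p, and suppose (1−ε) I_p ⪯ U_A^T S^T S U_A ⪯ (1+ε) I_p for 0 < ε < 1. Then (1/(1+ε)) U_{SA} U_{SA}^T ⪯ ((SA)^+)^T A^T A (SA)^+ ⪯ (1/(1−ε)) U_{SA} U_{SA}^T. -/
/-!
Write `A = U_A M` with `M = U_Aᵀ A` and put `X = M P`. Both `SA P` and `U_{SA} U_{SA}ᵀ` are the
orthogonal projection onto the range of `SA`, so `U_{SA} U_{SA}ᵀ = (S U_A X)ᵀ (S U_A X) = Xᵀ G X`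
with `G = U_Aᵀ Sᵀ S U_A`, while `Pᵀ Aᵀ A P = Xᵀ X`. The two-sided bound on `G` is therefore
transported to the claim by the congruence `Y ↦ Xᵀ Y X`, which preserves the PSD ordering.
-/

open Matrix

namespace Matrix

section Projections

variable {R : Type*} [CommSemiring R] {k l q : Type*} [Fintype k]

theorem mul_eq_self_of_range_le [Fintype l] [Fintype q] {Q : Matrix k k R} {C : Matrix k l R}
    {B : Matrix k q R} (hQC : Q * C = C)
    (hle : LinearMap.range B.mulVecLin ≤ LinearMap.range C.mulVecLin) : Q * B = B := by
  classical
  ext i j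
  obtain ⟨c, hc⟩ : ∃ c, C *ᵥ c = B *ᵥ Pi.single j 1 := hle ⟨Pi.single j 1, rfl⟩
  have hcol : (Q * B) *ᵥ Pi.single j 1 = B *ᵥ Pi.single j 1 := by
    rw [← mulVec_mulVec, ← hc, mulVec_mulVec, hQC]
  simpa using congrFun hcol i

theorem mul_transpose_mul_eq_self_of_range_le [Fintype l] [Fintype q] [DecidableEq l]
    {U : Matrix k l R} {B : Matrix k q R} (hU : Uᵀ * U = 1)
    (hle : LinearMap.range B.mulVecLin ≤ LinearMap.range U.mulVecLin) : U * Uᵀ * B = B :=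
  mul_eq_self_of_range_le (by rw [Matrix.mul_assoc, hU, Matrix.mul_one]) hle

theorem eq_of_isSymm_of_mul_eq_self {Q Q' : Matrix k k R} (hQ : Q.IsSymm) (hQ' : Q'.IsSymm)
    (hQ'Q : Q' * Q = Q) (hQQ' : Q * Q' = Q') : Q = Q' :=
  calc Q = Qᵀ := hQ.symm
    _ = (Q' * Q)ᵀ := by rw [hQ'Q]
    _ = Q * Q' := by rw [transpose_mul, hQ, hQ']
    _ = Q' := hQQ'

theorem mul_eq_mul_transpose_of_range_eq {n p : Type*} [Fintype n] [Fintype p] [DecidableEq p]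
    {B : Matrix k n R} {P : Matrix n k R} {U : Matrix k p R}
    (hBPB : B * P * B = B) (hBP : (B * P).IsSymm) (hU : Uᵀ * U = 1)
    (hrU : LinearMap.range U.mulVecLin = LinearMap.range B.mulVecLin) : B * P = U * Uᵀ := by
  have hUUB : U * Uᵀ * B = B := mul_transpose_mul_eq_self_of_range_le hU hrU.ge
  have hBPU : B * P * U = U := mul_eq_self_of_range_le hBPB hrU.le
  refine eq_of_isSymm_of_mul_eq_self hBP ?_ ?_ ?_
  · simp [IsSymm, transpose_mul]
  · rw [← Matrix.mul_assoc, hUUB]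
  · rw [← Matrix.mul_assoc, hBPU]

end Projections

section Congruence

variable {k l : Type*} [Fintype k] [Fintype l]

theorem PosSemidef.transpose_mul_mul_same_real {Y : Matrix k k ℝ} (hY : Y.PosSemidef)
    (X : Matrix k l ℝ) : (Xᵀ * Y * X).PosSemidef := by
  simpa [conjTranspose_eq_transpose_of_trivial] using hY.conjTranspose_mul_mul_same X

theorem posSemidef_transpose_mul_sub_inv_smul [DecidableEq k] {G : Matrix k k ℝ} {c : ℝ}
    (hc : 0 < c) (hG : (c • 1 - G).PosSemidef) (X : Matrix k l ℝ) :
    (Xᵀ * X - c⁻¹ • (Xᵀ * G * X)).PosSemidef := by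
  convert (hG.smul (inv_nonneg.mpr hc.le)).transpose_mul_mul_same_real X using 1
  simp [smul_sub, smul_smul, inv_mul_cancel₀ hc.ne', Matrix.mul_sub, Matrix.sub_mul]

theorem posSemidef_inv_smul_sub_transpose_mul [DecidableEq k] {G : Matrix k k ℝ} {c : ℝ}
    (hc : 0 < c) (hG : (G - c • 1).PosSemidef) (X : Matrix k l ℝ) :
    (c⁻¹ • (Xᵀ * G * X) - Xᵀ * X).PosSemidef := by
  convert (hG.smul (inv_nonneg.mpr hc.le)).transpose_mul_mul_same_real X using 1
  simp [smul_sub, smul_smul, inv_mul_cancel₀ hc.ne', Matrix.mul_sub, Matrix.sub_mul]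

end Congruence

end Matrix

theorem stmt13_general {m n r p : ℕ}
    (A : Matrix (Fin m) (Fin n) ℝ) (S : Matrix (Fin r) (Fin m) ℝ)
    (UA : Matrix (Fin m) (Fin p) ℝ)
    (hUA : UAᵀ * UA = 1)
    (hrUA : LinearMap.range UA.mulVecLin = LinearMap.range A.mulVecLin)
    (USA : Matrix (Fin r) (Fin p) ℝ)
    (hUSA : USAᵀ * USA = 1)
    (hrUSA : LinearMap.range USA.mulVecLin = LinearMap.range (S * A).mulVecLin)
    -- P is the Moore–Penrose pseudoinverse of S * A
    (P : Matrix (Fin n) (Fin r) ℝ)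
    (hP1 : S * A * P * (S * A) = S * A)
    (hP3 : (S * A * P).IsSymm)
    (ε : ℝ) (hε0 : 0 < ε) (hε1 : ε < 1)
    (hlo : (UAᵀ * Sᵀ * S * UA - (1 - ε) • 1).PosSemidef)
    (hhi : ((1 + ε) • 1 - UAᵀ * Sᵀ * S * UA).PosSemidef) :
    (Pᵀ * Aᵀ * A * P - (1 / (1 + ε)) • (USA * USAᵀ)).PosSemidef ∧
      ((1 / (1 - ε)) • (USA * USAᵀ) - Pᵀ * Aᵀ * A * P).PosSemidef := by
  set X := UAᵀ * A * P
  have hA : UA * UAᵀ * A = A := mul_transpose_mul_eq_self_of_range_le hUA hrUA.ge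
  have hSAP : S * A * P = USA * USAᵀ := mul_eq_mul_transpose_of_range_eq hP1 hP3 hUSA hrUSA
  have hAA : Pᵀ * Aᵀ * A * P = Xᵀ * X := by
    conv_lhs => rw [← hA]
    simp only [X, transpose_mul, transpose_transpose, Matrix.mul_assoc]
    rw [← Matrix.mul_assoc UAᵀ UA, hUA, Matrix.one_mul]
  have hUU : USA * USAᵀ = Xᵀ * (UAᵀ * Sᵀ * S * UA) * X := by
    calc USA * USAᵀ = (USA * USAᵀ)ᵀ * (USA * USAᵀ) := by
          rw [transpose_mul, transpose_transpose, Matrix.mul_assoc, ← Matrix.mul_assoc USAᵀ,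
            hUSA, Matrix.one_mul]
      _ = (S * (UA * UAᵀ * A) * P)ᵀ * (S * (UA * UAᵀ * A) * P) := by
          rw [hA, ← hSAP, Matrix.mul_assoc S]
      _ = Xᵀ * (UAᵀ * Sᵀ * S * UA) * X := by
          simp only [X, transpose_mul, transpose_transpose, Matrix.mul_assoc]
  rw [hAA, hUU, one_div, one_div]
  exact ⟨posSemidef_transpose_mul_sub_inv_smul (by linarith) hhi X,
    posSemidef_inv_smul_sub_transpose_mul (by linarith) hlo X⟩

theorem stmt13 {m n r p : ℕ}
    (A : Matrix (Fin m) (Fin n) ℝ) (S : Matrix (Fin r) (Fin m) ℝ)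
    (hrSA : (S * A).rank = p) (hrA : A.rank = p)
    (UA : Matrix (Fin m) (Fin p) ℝ)
    (hUA : UAᵀ * UA = 1)
    (hrUA : LinearMap.range UA.mulVecLin = LinearMap.range A.mulVecLin)
    (USA : Matrix (Fin r) (Fin p) ℝ)
    (hUSA : USAᵀ * USA = 1)
    (hrUSA : LinearMap.range USA.mulVecLin = LinearMap.range (S * A).mulVecLin)
    -- P is the Moore–Penrose pseudoinverse of S * A
    (P : Matrix (Fin n) (Fin r) ℝ)
    (hP1 : S * A * P * (S * A) = S * A) (hP2 : P * (S * A) * P = P)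
    (hP3 : (S * A * P).IsSymm) (hP4 : (P * (S * A)).IsSymm)
    (ε : ℝ) (hε0 : 0 < ε) (hε1 : ε < 1)
    (hlo : (UAᵀ * Sᵀ * S * UA - (1 - ε) • 1).PosSemidef)
    (hhi : ((1 + ε) • 1 - UAᵀ * Sᵀ * S * UA).PosSemidef) :
    (Pᵀ * Aᵀ * A * P - (1 / (1 + ε)) • (USA * USAᵀ)).PosSemidef ∧
      ((1 / (1 - ε)) • (USA * USAᵀ) - Pᵀ * Aᵀ * A * P).PosSemidef :=
  stmt13_general A S UA hUA hrUA USA hUSA hrUSA P hP1 hP3 ε hε0 hε1 hlo hhi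
end

section
/- Let w_i, w_j ∈ ℝ^n be vectors with Âw_i ⊥ Âw_j and ‖Âw_i‖ = ‖Âw_j‖ = 1 for a matrix Â = SA, where S satisfies the sketching guarantee |w^T A^T A w' − w^T Â^T Â w'| ≤ (ε/3)‖Aw‖‖Aw'‖ for all w, w' ∈ ℝ^n, with 0 < ε < 1/2. Then |⟨Aw_i, Aw_j⟩| ≤ ε/(3−ε) and 1/(1+ε/3) ≤ ‖Aw_i‖² ≤ 1/(1−ε/3). -/
/-!
Put `a = ‖A wᵢ‖²`, `b = ‖A wⱼ‖²`, `c = ⟨A wᵢ, A wⱼ⟩` and `δ = ε/3`. The sketching guarantee for the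
pair `(wᵢ, wᵢ)` reads `|a - 1| ≤ δ a`, which pins `a` between `1/(1+δ)` and `1/(1-δ)`; likewise
for `b`. For the pair `(wᵢ, wⱼ)` it reads `|c| ≤ δ √a √b ≤ δ/(1-δ) = ε/(3-ε)`.
-/

open Matrix

section RelativeError

variable {δ a : ℝ}

theorem le_one_div_one_sub_of_abs_sub_one_le (hδ : δ < 1) (h : |a - 1| ≤ δ * a) :
    a ≤ 1 / (1 - δ) := by
  rw [le_div_iff₀ (by linarith)]
  linarith [(abs_le.mp h).2]

theorem one_div_one_add_le_of_abs_sub_one_le (hδ : 0 ≤ δ) (h : |a - 1| ≤ δ * a) :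
    1 / (1 + δ) ≤ a := by
  rw [div_le_iff₀ (by linarith)]
  linarith [(abs_le.mp h).1]

theorem abs_le_mul_of_abs_le_mul_sqrt_mul_sqrt {b c M : ℝ} (hδ : 0 ≤ δ) (hM : 0 ≤ M)
    (ha : a ≤ M) (hb : b ≤ M) (h : |c| ≤ δ * √a * √b) : |c| ≤ δ * M := by
  have hab : √a * √b ≤ M :=
    calc √a * √b ≤ √M * √M := mul_le_mul (Real.sqrt_le_sqrt ha) (Real.sqrt_le_sqrt hb)
            (Real.sqrt_nonneg _) (Real.sqrt_nonneg _)
      _ = M := Real.mul_self_sqrt hM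
  calc |c| ≤ δ * (√a * √b) := by rwa [← mul_assoc]
    _ ≤ δ * M := mul_le_mul_of_nonneg_left hab hδ

end RelativeError

theorem dotProduct_self_nonneg_real {ι : Type*} [Fintype ι] (v : ι → ℝ) : 0 ≤ v ⬝ᵥ v :=
  Finset.sum_nonneg fun i _ => mul_self_nonneg (v i)

theorem stmt15 {m n r : ℕ}
    (A : Matrix (Fin m) (Fin n) ℝ) (S : Matrix (Fin r) (Fin m) ℝ)
    (ε : ℝ) (hε0 : 0 < ε) (hε1 : ε < 1 / 2)
    (hsk : ∀ w w' : Fin n → ℝ,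
      |A.mulVec w ⬝ᵥ A.mulVec w' - (S * A).mulVec w ⬝ᵥ (S * A).mulVec w'| ≤
        ε / 3 * Real.sqrt (A.mulVec w ⬝ᵥ A.mulVec w)
          * Real.sqrt (A.mulVec w' ⬝ᵥ A.mulVec w'))
    (wi wj : Fin n → ℝ)
    (hperp : (S * A).mulVec wi ⬝ᵥ (S * A).mulVec wj = 0)
    (hni : (S * A).mulVec wi ⬝ᵥ (S * A).mulVec wi = 1)
    (hnj : (S * A).mulVec wj ⬝ᵥ (S * A).mulVec wj = 1) :
    |A.mulVec wi ⬝ᵥ A.mulVec wj| ≤ ε / (3 - ε) ∧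
      1 / (1 + ε / 3) ≤ A.mulVec wi ⬝ᵥ A.mulVec wi ∧
      A.mulVec wi ⬝ᵥ A.mulVec wi ≤ 1 / (1 - ε / 3) := by
  have hδ0 : 0 ≤ ε / 3 := by positivity
  have hδ1 : ε / 3 < 1 := by linarith
  have diag : ∀ w, (S * A).mulVec w ⬝ᵥ (S * A).mulVec w = 1 →
      |A.mulVec w ⬝ᵥ A.mulVec w - 1| ≤ ε / 3 * (A.mulVec w ⬝ᵥ A.mulVec w) := fun w hw => by
    simpa only [hw, mul_assoc, Real.mul_self_sqrt (dotProduct_self_nonneg_real _)] using hsk w w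
  have hi := diag wi hni
  have hcross := hsk wi wj
  rw [hperp, sub_zero] at hcross
  refine ⟨?_, one_div_one_add_le_of_abs_sub_one_le hδ0 hi,
    le_one_div_one_sub_of_abs_sub_one_le hδ1 hi⟩
  calc |A.mulVec wi ⬝ᵥ A.mulVec wj| ≤ ε / 3 * (1 / (1 - ε / 3)) :=
        abs_le_mul_of_abs_le_mul_sqrt_mul_sqrt hδ0 (by bound)
          (le_one_div_one_sub_of_abs_sub_one_le hδ1 hi)
          (le_one_div_one_sub_of_abs_sub_one_le hδ1 (diag wj hnj)) hcross
    _ = ε / (3 - ε) := by field_simp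
end
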